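/- Suppose moreover Im z = 1 (i.e. z = x + i for some real x). Then for every t ∈ [0,T], one has ‖w(t)‖ ≤ Y_t ≤ √(2at + 1). -/

import Mathlib

/-!
With `D = U - h`, the imaginary part solves `Y' = a Y / ‖D‖²`, so it can only increase and
`Y ≥ 1`. Since `|Y| ≤ ‖D‖`, the derivative of `Y² - 2at` is `2a (Y²/‖D‖² - 1) ≤ 0`, which gives
the upper bound. Finally `‖w‖²` and `Y²` have logarithmic derivatives `2a Re(1/D²)` and
`2a/‖D‖²`, the first never exceeding the second, so `‖w‖² / Y²` decreases from its value `1`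
at time `0`.
-/

open Set Complex ComplexConjugate

theorem HasDerivWithinAt.complex_im {f : ℝ → ℂ} {f' : ℂ} {s : Set ℝ} {t : ℝ}
    (hf : HasDerivWithinAt f f' s t) : HasDerivWithinAt (fun x => (f x).im) f'.im s t :=
  imCLM.hasFDerivAt.comp_hasDerivWithinAt t hf

theorem antitoneOn_of_hasDerivWithinAt_nonpos_of_forall {D : Set ℝ} (hD : Convex ℝ D)
    {f f' : ℝ → ℝ} (hf : ∀ x ∈ D, HasDerivWithinAt f (f' x) D x) (hf' : ∀ x ∈ D, f' x ≤ 0) :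
    AntitoneOn f D :=
  antitoneOn_of_hasDerivWithinAt_nonpos hD (fun x hx => (hf x hx).continuousWithinAt)
    (fun x hx => (hf x (interior_subset hx)).mono interior_subset)
    (fun x hx => hf' x (interior_subset hx))

theorem le_of_hasDerivWithinAt_pos_of_eq {f f' : ℝ → ℝ} {a b c : ℝ}
    (hf : ∀ x ∈ Icc a b, HasDerivWithinAt f (f' x) (Icc a b) x) (ha : c ≤ f a)
    (hc : ∀ x ∈ Icc a b, f x = c → 0 < f' x) : ∀ x ∈ Icc a b, c ≤ f x :=
  fun _ hx => image_le_of_deriv_right_lt_deriv_boundary' continuousOn_const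
    (fun x _ => hasDerivWithinAt_const x _ c) ha
    (fun x hx => (hf x hx).continuousWithinAt)
    (fun x hx => (hf x (Ico_subset_Icc_self hx)).mono_of_mem_nhdsWithin
      (Icc_mem_nhdsGE_of_mem hx))
    (fun x hx hfx => hc x (Ico_subset_Icc_self hx) hfx.symm) hx

theorem div_le_div_of_hasDerivWithinAt_mul {D : Set ℝ} (hD : Convex ℝ D)
    {N M α β : ℝ → ℝ} (hN : ∀ x ∈ D, HasDerivWithinAt N (α x * N x) D x)
    (hM : ∀ x ∈ D, HasDerivWithinAt M (β x * M x) D x) (hαβ : ∀ x ∈ D, α x ≤ β x)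
    (hN0 : ∀ x ∈ D, 0 ≤ N x) (hM0 : ∀ x ∈ D, 0 < M x) :
    AntitoneOn (fun x => N x / M x) D := by
  refine antitoneOn_of_hasDerivWithinAt_nonpos_of_forall hD
    (fun x hx => (hN x hx).div (hM x hx) (hM0 x hx).ne') fun x hx => ?_
  have hM0x := hM0 x hx
  have key : (α x * N x * M x - N x * (β x * M x)) / M x ^ 2 = (α x - β x) * (N x / M x) := by
    field_simp
  rw [key]
  exact mul_nonpos_of_nonpos_of_nonneg (sub_nonpos.2 (hαβ x hx)) (div_nonneg (hN0 x hx) hM0x.le)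

theorem im_ofReal_div_ofReal_sub (a u : ℝ) (z : ℂ) :
    ((a : ℂ) / ((u : ℂ) - z)).im = a * z.im / ‖(u : ℂ) - z‖ ^ 2 := by
  rw [div_im, ← normSq_eq_norm_sq]
  simp only [ofReal_re, ofReal_im, sub_im, zero_sub, zero_mul, mul_neg]
  ring

theorem inner_self_mul_div_sq (a : ℝ) (w D : ℂ) :
    inner ℝ w ((a : ℂ) * w / D ^ 2) = a * ((D ^ 2)⁻¹).re * ‖w‖ ^ 2 := by
  have key : (a : ℂ) * w / D ^ 2 * conj w = ((a * ‖w‖ ^ 2 : ℝ) : ℂ) * (D ^ 2)⁻¹ := by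
    rw [ofReal_mul, ofReal_pow, ← mul_conj']
    ring
  rw [Complex.inner, key, re_ofReal_mul]
  ring

def IsReverseLoewnerFlow (a : ℝ) (U : ℝ → ℝ) (T : ℝ) (h : ℝ → ℂ) : Prop :=
  ∀ t ∈ Icc 0 T, h t ≠ (U t : ℂ) ∧ HasDerivWithinAt h ((a : ℂ) / ((U t : ℂ) - h t)) (Icc 0 T) t

namespace IsReverseLoewnerFlow

variable {a : ℝ} {U : ℝ → ℝ} {T : ℝ} {h : ℝ → ℂ}

theorem norm_sq_sub_pos (hh : IsReverseLoewnerFlow a U T h) {t : ℝ} (ht : t ∈ Icc 0 T) :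
    0 < ‖(U t : ℂ) - h t‖ ^ 2 := by
  have := norm_pos_iff.2 (sub_ne_zero.2 (hh t ht).1.symm)
  positivity

theorem hasDerivWithinAt_im (hh : IsReverseLoewnerFlow a U T h) {t : ℝ} (ht : t ∈ Icc 0 T) :
    HasDerivWithinAt (fun s => (h s).im) (a / ‖(U t : ℂ) - h t‖ ^ 2 * (h t).im) (Icc 0 T) t := by
  convert (hh t ht).2.complex_im using 1
  rw [im_ofReal_div_ofReal_sub]
  ring

theorem hasDerivWithinAt_im_sq (hh : IsReverseLoewnerFlow a U T h) {t : ℝ} (ht : t ∈ Icc 0 T) :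
    HasDerivWithinAt (fun s => (h s).im ^ 2)
      (2 * a / ‖(U t : ℂ) - h t‖ ^ 2 * (h t).im ^ 2) (Icc 0 T) t :=
  ((hh.hasDerivWithinAt_im ht).fun_pow 2).congr_deriv (by norm_num; ring)

theorem im_le_im (hh : IsReverseLoewnerFlow a U T h) (ha : 0 < a) (h0 : 0 < (h 0).im)
    {t : ℝ} (ht : t ∈ Icc 0 T) : (h 0).im ≤ (h t).im :=
  le_of_hasDerivWithinAt_pos_of_eq (fun _ hs => hh.hasDerivWithinAt_im hs) le_rfl
    (fun s hs hY => by
      rw [hY]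
      exact mul_pos (div_pos ha (hh.norm_sq_sub_pos hs)) h0) t ht

theorem im_sq_sub_le (hh : IsReverseLoewnerFlow a U T h) (ha : 0 ≤ a) {t : ℝ}
    (ht : t ∈ Icc 0 T) : (h t).im ^ 2 - 2 * a * t ≤ (h 0).im ^ 2 := by
  have hanti : AntitoneOn (fun s => (h s).im ^ 2 - 2 * a * s) (Icc 0 T) := by
    refine antitoneOn_of_hasDerivWithinAt_nonpos_of_forall (convex_Icc 0 T)
      (fun s hs => (hh.hasDerivWithinAt_im_sq hs).sub
        ((hasDerivWithinAt_id s _).const_mul (2 * a))) fun s hs => ?_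
    have hY : (h s).im ^ 2 ≤ ‖(U s : ℂ) - h s‖ ^ 2 := by
      simpa [sq_abs] using pow_le_pow_left₀ (abs_nonneg _) (abs_im_le_norm ((U s : ℂ) - h s)) 2
    rw [mul_one, div_mul_eq_mul_div, sub_nonpos, div_le_iff₀ (hh.norm_sq_sub_pos hs)]
    exact mul_le_mul_of_nonneg_left hY (by positivity)
  simpa using hanti ⟨le_rfl, ht.1.trans ht.2⟩ ht ht.1

theorem norm_sq_div_im_sq_le (hh : IsReverseLoewnerFlow a U T h) (ha : 0 ≤ a)
    (hY : ∀ s ∈ Icc 0 T, 0 < (h s).im) {w : ℝ → ℂ} (hw : ∀ t ∈ Icc 0 T,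
      HasDerivWithinAt w ((a : ℂ) * w t / ((U t : ℂ) - h t) ^ 2) (Icc 0 T) t)
    {t : ℝ} (ht : t ∈ Icc 0 T) : ‖w t‖ ^ 2 / (h t).im ^ 2 ≤ ‖w 0‖ ^ 2 / (h 0).im ^ 2 := by
  have hratio : AntitoneOn (fun s => ‖w s‖ ^ 2 / (h s).im ^ 2) (Icc 0 T) :=
    div_le_div_of_hasDerivWithinAt_mul (convex_Icc 0 T)
      (α := fun s => 2 * (a * (((U s : ℂ) - h s) ^ 2)⁻¹.re))
      (fun s hs => by
        convert (hw s hs).norm_sq using 1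
        rw [inner_self_mul_div_sq]
        ring)
      (fun _ hs => hh.hasDerivWithinAt_im_sq hs)
      (fun s _ => by
        rw [mul_div_assoc, ← norm_pow, div_eq_mul_inv, ← norm_inv]
        exact mul_le_mul_of_nonneg_left (mul_le_mul_of_nonneg_left (re_le_norm _) ha)
          zero_le_two)
      (fun _ _ => by positivity) fun s hs => pow_pos (hY s hs) 2
  exact hratio ⟨le_rfl, ht.1.trans ht.2⟩ ht ht.1

end IsReverseLoewnerFlow

theorem reverse_loewner_deriv_bound_general
    (a : ℝ) (ha : 0 < a) (U : ℝ → ℝ)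
    (z : ℂ) (hz1 : z.im = 1) (T : ℝ)
    (h w : ℝ → ℂ) (hh0 : h 0 = z) (hw0 : w 0 = 1)
    (hh : ∀ t ∈ Set.Icc 0 T, h t ≠ (U t : ℂ) ∧
      HasDerivWithinAt h ((a : ℂ) / ((U t : ℂ) - h t)) (Set.Icc 0 T) t)
    (hw : ∀ t ∈ Set.Icc 0 T,
      HasDerivWithinAt w ((a : ℂ) * w t / ((U t : ℂ) - h t) ^ 2) (Set.Icc 0 T) t) :
    ∀ t ∈ Set.Icc 0 T, ‖w t‖ ≤ (h t).im ∧ (h t).im ≤ Real.sqrt (2 * a * t + 1) := by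
  have hflow : IsReverseLoewnerFlow a U T h := hh
  have hY0 : (h 0).im = 1 := by rw [hh0, hz1]
  have hY : ∀ t ∈ Icc 0 T, 1 ≤ (h t).im := fun t ht =>
    hY0 ▸ hflow.im_le_im ha (hY0 ▸ one_pos) ht
  intro t ht
  have hYt := hY t ht
  constructor
  · have hratio := hflow.norm_sq_div_im_sq_le ha.le (fun s hs => one_pos.trans_le (hY s hs)) hw ht
    rw [hw0, hY0, norm_one, one_pow, div_one, div_le_one (by positivity)] at hratio
    exact (pow_le_pow_iff_left₀ (norm_nonneg _) (by linarith) two_ne_zero).1 hratio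
  · have hgrowth := hflow.im_sq_sub_le ha.le ht
    rw [hY0, one_pow] at hgrowth
    rw [Real.le_sqrt (by linarith) (by nlinarith [ht.1])]
    linarith

/-- For the reverse Loewner flow started at `z = x + i` (i.e. `Im z = 1`), with spatial
derivative process `w`, one has `‖w(t)‖ ≤ Y_t ≤ √(2at + 1)` for all `t ∈ [0,T]`,
where `Y_t = Im h(t)`. -/
theorem reverse_loewner_deriv_bound
    (a : ℝ) (ha : 0 < a) (U : ℝ → ℝ) (hU : Continuous U)
    (z : ℂ) (hz : 0 < z.im) (hz1 : z.im = 1) (T : ℝ) (hT : 0 < T)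
    (h w : ℝ → ℂ) (hh0 : h 0 = z) (hw0 : w 0 = 1)
    (hh : ∀ t ∈ Set.Icc 0 T, h t ≠ (U t : ℂ) ∧
      HasDerivWithinAt h ((a : ℂ) / ((U t : ℂ) - h t)) (Set.Icc 0 T) t)
    (hw : ∀ t ∈ Set.Icc 0 T,
      HasDerivWithinAt w ((a : ℂ) * w t / ((U t : ℂ) - h t) ^ 2) (Set.Icc 0 T) t) :
    ∀ t ∈ Set.Icc 0 T, ‖w t‖ ≤ (h t).im ∧ (h t).im ≤ Real.sqrt (2 * a * t + 1) :=
  reverse_loewner_deriv_bound_general a ha U z hz1 T h w hh0 hw0 hh hw
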